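/- arXiv:math/9908153 — 2 statements merged into one kernel-verified Lean document; each statement's English description precedes it below -/
import Mathlib

section
/- The assignment Σ_{w∈W} r_w T_w ↦ Σ_{w∈W} r̄_w (T_{w⁻¹})⁻¹ is a well-defined map from the Hecke algebra H to itself (each basis element T_w is invertible in H), it is a ring endomorphism, and it is an involution (applying it twice is the identity). -/
/-!
Since `T_s² = (q - 1) T_s + q`, each `T_s` is invertible with inverse `q⁻¹ T_s + (q⁻¹ - 1)`, and
these inverses satisfy the same quadratic relation with `q⁻¹` in place of `q`. Inverting also
reverses reduced products, so the elements `(T_{w⁻¹})⁻¹` satisfy all the defining relations of the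
`T_w` with `q` replaced by `q⁻¹ = conj q`. Any `conj`-semilinear map sending the `T_w` to such a
family is multiplicative: by induction on length it suffices to compare both sides on `T_w T_s`,
where either `ℓ(ws) > ℓ(w)` and the relation is a reduced product, or `w = us` with `ℓ(u) < ℓ(w)`
and both sides expand by the quadratic relation. A ring endomorphism is determined by its values on
the `r T_w`, and on these the square of the bar map is the identity.
-/

namespace KLPaper

open Polynomial
open scoped Classical

variable {B : Type*} {W : Type*} [Group W] {M : CoxeterMatrix B}

/-- The Bruhat order on a Coxeter group: generated by right multiplication by
reflections which increases the length. -/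
def bruhatLE (cs : CoxeterSystem M W) : W → W → Prop :=
  Relation.ReflTransGen (fun x y =>
    (∃ t, cs.IsReflection t ∧ y = x * t) ∧ cs.length x < cs.length y)

/-- A commutative ring `R` containing `ℤ[q,q⁻¹]`, with a direct sum decomposition
`R = ⊕_{k ∈ ℤ} R_k` into additive subgroups and an involutive ring endomorphism `conj`
such that `R_i R_j ⊆ R_{i+j}`, `conj R_i = R_{-i}`, `1 ∈ R_0`, `q ∈ R_2`, `conj q = q⁻¹`. -/
structure KLRing (R : Type*) [CommRing R] where
  q : R
  qinv : R
  q_qinv : q * qinv = 1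
  grade : ℤ → AddSubgroup R
  decomp : DirectSum.IsInternal grade
  conj : R →+* R
  conj_conj : ∀ r : R, conj (conj r) = r
  grade_mul : ∀ (i j : ℤ) (r s : R), r ∈ grade i → s ∈ grade j → r * s ∈ grade (i + j)
  conj_grade : ∀ (i : ℤ) (r : R), r ∈ grade i → conj r ∈ grade (-i)
  one_mem : (1 : R) ∈ grade 0
  q_mem : q ∈ grade 2
  conj_q : conj q = qinv
  laurent_inj : Function.Injective fun f : ℤ →₀ ℤ =>
    f.sum fun k c => c • (if 0 ≤ k then q ^ k.toNat else qinv ^ (-k).toNat)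

variable {R : Type*} [CommRing R]

/-- The subgroup `R_0 + R_1 + ⋯ + R_{n-1} = ⊕_{i=0}^{n-1} R_i` of `R`. -/
def KLRing.gradeSum (K : KLRing R) (n : ℕ) : AddSubgroup R :=
  ⨆ i ∈ Finset.range n, K.grade (i : ℤ)

/-- `r` belongs to `ℤ[q] ⊆ R`. -/
def KLRing.InZq (K : KLRing R) (r : R) : Prop :=
  ∃ p : Polynomial ℤ, Polynomial.aeval K.q p = r

/-- The Hecke algebra of `(W, S)` over `R`: the free `R`-module with basis
`{T_w}_{w ∈ W}`, with multiplication determined by `T_{w₁} T_{w₂} = T_{w₁ w₂}`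
whenever `ℓ(w₁w₂) = ℓ(w₁) + ℓ(w₂)` and `(T_s + 1)(T_s - q) = 0` for `s ∈ S`. -/
structure Hecke (cs : CoxeterSystem M W) (R : Type*) [CommRing R] (q : R) where
  carrier : Type*
  [ring : Ring carrier]
  [alg : Algebra R carrier]
  T : W → carrier
  basis : Module.Basis W R carrier
  basis_eq : ∀ w : W, basis w = T w
  T_mul : ∀ w₁ w₂ : W, cs.length (w₁ * w₂) = cs.length w₁ + cs.length w₂ →
    T w₁ * T w₂ = T (w₁ * w₂)
  T_quad : ∀ i : B, (T (cs.simple i) + 1) * (T (cs.simple i) - algebraMap R carrier q) = 0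

attribute [instance] Hecke.ring Hecke.alg

variable {cs : CoxeterSystem M W}

/-- `bar` is the bar involution `Σ r_w T_w ↦ Σ conj(r_w) (T_{w⁻¹})⁻¹` of the Hecke algebra. -/
def IsBar (K : KLRing R) (Hk : Hecke cs R K.q) (bar : Hk.carrier →+* Hk.carrier) : Prop :=
  ∀ (r : R) (w : W), bar (r • Hk.T w) = K.conj r • Ring.inverse (Hk.T w⁻¹)

/-- `j` is the involution `j(Σ r_w T_w) = Σ r_w (-q)^{ℓ(w)} (T_{w⁻¹})⁻¹` of the Hecke algebra. -/
def IsJ (K : KLRing R) (Hk : Hecke cs R K.q) (j : Hk.carrier →ₐ[R] Hk.carrier) : Prop :=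
  ∀ w : W, j (Hk.T w) = (-K.q) ^ cs.length w • Ring.inverse (Hk.T w⁻¹)

/-- `C` is the Kazhdan–Lusztig basis element `C_w`:
`C = Σ_{y ≤ w} P_{y,w} T_y` with `P_{w,w} = 1`,
`P_{y,w} ∈ ⊕_{i=0}^{ℓ(w)-ℓ(y)-1} R_i` for `y < w`, and `bar C = q^{-ℓ(w)} C`.
(The coefficient `P_{y,w}` of `C_w` is `Hk.basis.repr C y`.) -/
def IsKLElt (K : KLRing R) (Hk : Hecke cs R K.q)
    (bar : Hk.carrier →+* Hk.carrier) (w : W) (C : Hk.carrier) : Prop :=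
  Hk.basis.repr C w = 1 ∧
  (∀ y : W, Hk.basis.repr C y ≠ 0 → bruhatLE cs y w) ∧
  (∀ y : W, bruhatLE cs y w → y ≠ w →
    Hk.basis.repr C y ∈ K.gradeSum (cs.length w - cs.length y)) ∧
  bar C = K.qinv ^ cs.length w • C

/-- The standard parabolic subgroup `W_J = ⟨J⟩`. -/
def WJ (cs : CoxeterSystem M W) (J : Set B) : Subgroup W :=
  Subgroup.closure (cs.simple '' J)

/-- `W^J`: the set of minimal length coset representatives of `W/W_J`,
i.e. the `w ∈ W` with `ws > w` for all `s ∈ J`. -/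
def minReps (cs : CoxeterSystem M W) (J : Set B) : Set W :=
  {w | ∀ i ∈ J, cs.length w < cs.length (w * cs.simple i)}

/-- The Hecke algebra `H(W_J)` of the standard parabolic subgroup `W_J`
(with generating set `J`; the length function of `(W_J, J)` is the restriction
of that of `(W, S)`). -/
structure HeckeJ (cs : CoxeterSystem M W) (J : Set B) (R : Type*) [CommRing R] (q : R) where
  carrier : Type*
  [ring : Ring carrier]
  [alg : Algebra R carrier]
  T : WJ cs J → carrier
  basis : Module.Basis (WJ cs J) R carrier
  basis_eq : ∀ x, basis x = T x
  T_mul : ∀ x₁ x₂ : WJ cs J,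
    cs.length ((x₁ : W) * (x₂ : W)) = cs.length (x₁ : W) + cs.length (x₂ : W) →
    T x₁ * T x₂ = T (x₁ * x₂)
  T_quad : ∀ (i : B) (hi : i ∈ J),
    (T ⟨cs.simple i, Subgroup.subset_closure ⟨i, hi, rfl⟩⟩ + 1) *
      (T ⟨cs.simple i, Subgroup.subset_closure ⟨i, hi, rfl⟩⟩ - algebraMap R carrier q) = 0

attribute [instance] HeckeJ.ring HeckeJ.alg

/-- `(Mod, φ)` is (a realization of) the induced module `H^{J,a} = H ⊗_{H(W_J)} R^a`
together with `φ = φ^{J,a} : h ↦ h ⊗ 1^a`:  `φ` is surjective and its kernel is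
the `R`-span of the elements `h (T_s - a)`, `s ∈ J`, which is exactly the kernel of
`h ↦ h ⊗ 1^a`. -/
def IsInduced {q : R} (Hk : Hecke cs R q) (J : Set B) (a : R)
    (Mod : Type*) [AddCommGroup Mod] [Module R Mod] (φ : Hk.carrier →ₗ[R] Mod) : Prop :=
  Function.Surjective φ ∧
  LinearMap.ker φ = Submodule.span R
    {h : Hk.carrier | ∃ (g : Hk.carrier) (i : B), i ∈ J ∧
      h = g * (Hk.T (cs.simple i) - algebraMap R Hk.carrier a)}

/-- `C` is the parabolic Kazhdan–Lusztig basis element `C_w^{J,a}` of `H^{J,a}`: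
`C = Σ_{y ∈ W^J, y ≤ w} P^{J,a}_{y,w} T_y^{J,a}` with `P^{J,a}_{w,w} = 1`,
`P^{J,a}_{y,w} ∈ ⊕_{i=0}^{ℓ(w)-ℓ(y)-1} R_i` for `y < w`, and `barJ C = q^{-ℓ(w)} C`,
where `b` is the basis `(T_y^{J,a})_{y ∈ W^J}` of `H^{J,a}` and `barJ` its bar involution.
(The coefficient `P^{J,a}_{y,w}` of `C_w^{J,a}` is `b.repr C y`.) -/
def IsKLEltJ (K : KLRing R) {J : Set B} {Mod : Type*} [AddCommGroup Mod] [Module R Mod]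
    (b : Module.Basis (minReps cs J) R Mod) (barJ : Mod →+ Mod)
    (w : minReps cs J) (C : Mod) : Prop :=
  b.repr C w = 1 ∧
  (∀ y : minReps cs J, b.repr C y ≠ 0 → bruhatLE cs y.1 w.1) ∧
  (∀ y : minReps cs J, bruhatLE cs y.1 w.1 → y ≠ w →
    b.repr C y ∈ K.gradeSum (cs.length w.1 - cs.length y.1)) ∧
  barJ C = K.qinv ^ cs.length w.1 • C


open scoped Ring

theorem _root_.CoxeterSystem.reduced_simple_induction_right (cs : CoxeterSystem M W)
    {p : W → Prop} (one : p 1)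
    (mul_simple : ∀ w i, cs.length (w * cs.simple i) = cs.length w + 1 → p w →
      p (w * cs.simple i))
    (w : W) : p w := by
  induction h : cs.length w using Nat.strong_induction_on generalizing w with
  | _ n ih =>
    rcases eq_or_ne w 1 with rfl | hw
    · exact one
    obtain ⟨i, hi⟩ := cs.exists_rightDescent_of_ne_one hw
    have hlen : cs.length (w * cs.simple i) + 1 = cs.length w := cs.isRightDescent_iff.mp hi
    rw [← cs.simple_mul_simple_cancel_right (w := w) (i := i)]
    exact mul_simple _ i (by rw [cs.simple_mul_simple_cancel_right]; omega)
      (ih _ (by omega) _ rfl)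

theorem map_ringInverse {F M N : Type*} [MonoidWithZero M] [MonoidWithZero N] [FunLike F M N]
    [MonoidHomClass F M N] (f : F) {x : M} (hx : IsUnit x) : f x⁻¹ʳ = (f x)⁻¹ʳ := by
  obtain ⟨u, rfl⟩ := hx
  rw [Ring.inverse_unit]
  exact (Ring.inverse_unit (Units.map (f : M →* N) u)).symm

section Quadratic

variable {A : Type*} [Ring A] [Algebra R A] {r r' : R} {a b c : A}

theorem mul_eq_of_mul_self_eq (hab : a * b = c) (hb : b * b = (r - 1) • b + r • 1) :
    c * b = (r - 1) • c + r • a := by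
  rw [← hab, mul_assoc, hb, mul_add, mul_smul_comm, mul_smul_comm, mul_one]

theorem mul_quadraticInverse (hr : r * r' = 1) (hb : b * b = (r - 1) • b + r • 1) :
    b * (r' • b + (r' - 1) • 1) = 1 := by
  rw [mul_add, mul_smul_comm, mul_smul_comm, hb, mul_one]
  linear_combination (norm := module) hr • (b + 1)

theorem quadraticInverse_mul (hr : r * r' = 1) (hb : b * b = (r - 1) • b + r • 1) :
    (r' • b + (r' - 1) • 1) * b = 1 := by
  rw [add_mul, smul_mul_assoc, smul_mul_assoc, hb, one_mul]
  linear_combination (norm := module) hr • (b + 1)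

theorem inverse_eq_of_mul_self_eq (hr : r * r' = 1) (hb : b * b = (r - 1) • b + r • 1) :
    b⁻¹ʳ = r' • b + (r' - 1) • 1 :=
  Ring.inverse_unit ⟨b, _, mul_quadraticInverse hr hb, quadraticInverse_mul hr hb⟩

theorem isUnit_of_mul_self_eq (hr : r * r' = 1) (hb : b * b = (r - 1) • b + r • 1) :
    IsUnit b :=
  ⟨⟨b, _, mul_quadraticInverse hr hb, quadraticInverse_mul hr hb⟩, rfl⟩

theorem inverse_mul_self_eq (hr : r * r' = 1) (hb : b * b = (r - 1) • b + r • 1) :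
    b⁻¹ʳ * b⁻¹ʳ = (r' - 1) • b⁻¹ʳ + r' • 1 := by
  calc b⁻¹ʳ * b⁻¹ʳ = (r' • b + (r' - 1) • 1) * b⁻¹ʳ := by rw [← inverse_eq_of_mul_self_eq hr hb]
    _ = r' • (b * b⁻¹ʳ) + (r' - 1) • b⁻¹ʳ := by
      rw [add_mul, smul_mul_assoc, smul_mul_assoc, one_mul]
    _ = (r' - 1) • b⁻¹ʳ + r' • 1 := by
      rw [Ring.mul_inverse_cancel _ (isUnit_of_mul_self_eq hr hb), add_comm]

end Quadratic

/-- The defining relations of the basis `(T_w)` of the Hecke algebra with parameter `c`. -/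
structure IsHeckeFamily {A : Type*} [Ring A] [Algebra R A] (cs : CoxeterSystem M W) (c : R)
    (X : W → A) : Prop where
  one : X 1 = 1
  mul : ∀ u v, cs.length (u * v) = cs.length u + cs.length v → X (u * v) = X u * X v
  mul_self_simple : ∀ i, X (cs.simple i) * X (cs.simple i) = (c - 1) • X (cs.simple i) + c • 1

namespace IsHeckeFamily

variable {A : Type*} [Ring A] [Algebra R A] {c c' : R} {X : W → A}

theorem mul_simple (hX : IsHeckeFamily cs c X) {w : W} {i : B}
    (h : cs.length (w * cs.simple i) = cs.length w + 1) :
    X (w * cs.simple i) = X w * X (cs.simple i) :=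
  hX.mul _ _ (by rw [cs.length_simple, h])

theorem isUnit (hX : IsHeckeFamily cs c X) (hc : IsUnit c) (w : W) : IsUnit (X w) := by
  obtain ⟨c', hc'⟩ := hc.exists_right_inv
  induction w using cs.reduced_simple_induction_right with
  | one => rw [hX.one]; exact isUnit_one
  | mul_simple w i hw ih =>
    rw [hX.mul_simple hw]
    exact ih.mul (isUnit_of_mul_self_eq hc' (hX.mul_self_simple i))

theorem inverse_inv (hX : IsHeckeFamily cs c X) (hc : c * c' = 1) :
    IsHeckeFamily cs c' fun w => (X w⁻¹)⁻¹ʳ where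
  one := by rw [inv_one, hX.one, Ring.inverse_one]
  mul u v huv := by
    have hvu : cs.length (v⁻¹ * u⁻¹) = cs.length v⁻¹ + cs.length u⁻¹ := by
      rw [← mul_inv_rev, cs.length_inv, cs.length_inv, cs.length_inv, huv, add_comm]
    rw [mul_inv_rev, hX.mul _ _ hvu,
      Ring.inverse_mul (Or.inl (hX.isUnit (IsUnit.of_mul_eq_one c' hc) _))]
  mul_self_simple i := by
    rw [cs.inv_simple]
    exact inverse_mul_self_eq hc (hX.mul_self_simple i)

end IsHeckeFamily

namespace Hecke

variable {q : R} (Hk : Hecke cs R q)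

theorem T_one : Hk.T 1 = 1 := by
  have h : (LinearMap.mulLeft R (Hk.T 1) : Hk.carrier →ₗ[R] Hk.carrier) = LinearMap.id :=
    Hk.basis.ext fun w => by
      rw [LinearMap.mulLeft_apply, LinearMap.id_apply, Hk.basis_eq,
        Hk.T_mul 1 w (by rw [one_mul, cs.length_one, zero_add]), one_mul]
  simpa using LinearMap.congr_fun h 1

theorem T_simple_mul_self (i : B) :
    Hk.T (cs.simple i) * Hk.T (cs.simple i) = (q - 1) • Hk.T (cs.simple i) + q • 1 := by
  have h := Hk.T_quad i
  rw [Algebra.algebraMap_eq_smul_one, add_mul, mul_sub, mul_sub, mul_smul_comm] at h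
  simp only [one_mul, mul_one] at h
  linear_combination (norm := module) h

theorem isHeckeFamily_T : IsHeckeFamily cs q Hk.T where
  one := Hk.T_one
  mul u v h := (Hk.T_mul u v h).symm
  mul_self_simple := Hk.T_simple_mul_self

theorem isUnit_T (hq : IsUnit q) (w : W) : IsUnit (Hk.T w) :=
  Hk.isHeckeFamily_T.isUnit hq w

theorem ringHom_ext {A : Type*} [Ring A] {f g : Hk.carrier →+* A}
    (h : ∀ (r : R) (w : W), f (r • Hk.T w) = g (r • Hk.T w)) : f = g := by
  ext x
  rw [← Hk.basis.linearCombination_repr x, Finsupp.linearCombination_apply, map_finsuppSum,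
    map_finsuppSum]
  exact Finsupp.sum_congr fun w _ => by rw [Hk.basis_eq, h]

section Lift

variable {A : Type*} [Ring A] [Algebra R A] {σ : R →+* R} (φ : Hk.carrier →ₛₗ[σ] A)

theorem map_T_mul_T_simple (hφ : IsHeckeFamily cs (σ q) fun w => φ (Hk.T w)) (w : W) (i : B) :
    φ (Hk.T w * Hk.T (cs.simple i)) = φ (Hk.T w) * φ (Hk.T (cs.simple i)) := by
  rcases cs.length_mul_simple w i with hw | hw
  · rw [← Hk.isHeckeFamily_T.mul_simple hw, hφ.mul_simple hw]
  · -- both sides reduce to `(c - 1) X_w + c X_u` with `w = us`, for `X = T` and `X = φ ∘ T`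
    obtain ⟨u, rfl, hu⟩ : ∃ u, u * cs.simple i = w ∧
        cs.length (u * cs.simple i) = cs.length u + 1 :=
      ⟨w * cs.simple i, cs.simple_mul_simple_cancel_right i, by
        rw [cs.simple_mul_simple_cancel_right]; omega⟩
    rw [mul_eq_of_mul_self_eq (Hk.isHeckeFamily_T.mul_simple hu).symm (Hk.T_simple_mul_self i),
      mul_eq_of_mul_self_eq (hφ.mul_simple hu).symm (hφ.mul_self_simple i), map_add,
      map_smulₛₗ, map_smulₛₗ, map_sub, map_one]

theorem map_mul_T_simple (hφ : IsHeckeFamily cs (σ q) fun w => φ (Hk.T w)) (x : Hk.carrier)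
    (i : B) : φ (x * Hk.T (cs.simple i)) = φ x * φ (Hk.T (cs.simple i)) := by
  have h : φ ∘ₛₗ LinearMap.mulRight R (Hk.T (cs.simple i)) =
      LinearMap.mulRight R (φ (Hk.T (cs.simple i))) ∘ₛₗ φ :=
    Hk.basis.ext fun w => by simpa [Hk.basis_eq] using Hk.map_T_mul_T_simple φ hφ w i
  exact LinearMap.congr_fun h x

theorem map_mul_T (hφ : IsHeckeFamily cs (σ q) fun w => φ (Hk.T w)) (x : Hk.carrier) (v : W) :
    φ (x * Hk.T v) = φ x * φ (Hk.T v) := by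
  induction v using cs.reduced_simple_induction_right with
  | one => rw [hφ.one, Hk.T_one, mul_one, mul_one]
  | mul_simple v i hv ih =>
    rw [Hk.isHeckeFamily_T.mul_simple hv, ← mul_assoc, map_mul_T_simple _ _ hφ, ih, mul_assoc,
      map_T_mul_T_simple _ _ hφ]

theorem map_mul (hφ : IsHeckeFamily cs (σ q) fun w => φ (Hk.T w)) (x y : Hk.carrier) :
    φ (x * y) = φ x * φ y := by
  have h : φ ∘ₛₗ LinearMap.mulLeft R x = LinearMap.mulLeft R (φ x) ∘ₛₗ φ :=
    Hk.basis.ext fun w => by simpa [Hk.basis_eq] using Hk.map_mul_T φ hφ x w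
  exact LinearMap.congr_fun h y

end Lift

end Hecke

section Bar

variable (K : KLRing R) (Hk : Hecke cs R K.q)

theorem KLRing.isUnit_q : IsUnit K.q :=
  .of_mul_eq_one _ K.q_qinv

noncomputable def barSemilinear : Hk.carrier →ₛₗ[K.conj] Hk.carrier :=
  Finsupp.linearCombination R (fun w => (Hk.T w⁻¹)⁻¹ʳ) ∘ₛₗ
    Finsupp.mapRange.linearMap K.conj.toSemilinearMap ∘ₛₗ Hk.basis.repr.toLinearMap

theorem barSemilinear_T (w : W) : barSemilinear K Hk (Hk.T w) = (Hk.T w⁻¹)⁻¹ʳ := by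
  simp [barSemilinear, ← Hk.basis_eq]

theorem isHeckeFamily_barSemilinear_T :
    IsHeckeFamily cs (K.conj K.q) fun w => barSemilinear K Hk (Hk.T w) := by
  simp only [barSemilinear_T]
  exact Hk.isHeckeFamily_T.inverse_inv (by rw [K.conj_q, K.q_qinv])

noncomputable def bar : Hk.carrier →+* Hk.carrier :=
  { barSemilinear K Hk with
    map_zero' := map_zero (barSemilinear K Hk)
    map_one' := Hk.T_one ▸ (isHeckeFamily_barSemilinear_T K Hk).one
    map_mul' := Hk.map_mul _ (isHeckeFamily_barSemilinear_T K Hk) }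

theorem bar_apply (x : Hk.carrier) : bar K Hk x = barSemilinear K Hk x := rfl

theorem isBar_bar : IsBar K Hk (bar K Hk) := fun r w => by
  rw [bar_apply, map_smulₛₗ, barSemilinear_T]

theorem bar_bar (x : Hk.carrier) : bar K Hk (bar K Hk x) = x := by
  have h : (bar K Hk).comp (bar K Hk) = RingHom.id _ := Hk.ringHom_ext fun r w => by
    rw [RingHom.comp_apply, isBar_bar, bar_apply, map_smulₛₗ, K.conj_conj, ← bar_apply,
      map_ringInverse _ (Hk.isUnit_T K.isUnit_q w⁻¹), bar_apply, barSemilinear_T, inv_inv,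
      Ring.inverse_inverse (Hk.isUnit_T K.isUnit_q w), RingHom.id_apply]
  exact RingHom.congr_fun h x

theorem eq_bar_of_isBar {f : Hk.carrier →+* Hk.carrier} (hf : IsBar K Hk f) : f = bar K Hk :=
  Hk.ringHom_ext fun r w => by rw [hf, isBar_bar]

end Bar

/-- The assignment `Σ r_w T_w ↦ Σ conj(r_w) (T_{w⁻¹})⁻¹` is a well-defined
map from the Hecke algebra `H` to itself (each `T_w` is invertible in `H`), it is a
ring endomorphism, and it is an involution. -/
theorem statement0 (K : KLRing R) (Hk : Hecke cs R K.q) :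
    (∀ w : W, IsUnit (Hk.T w)) ∧
    ∃ bar : Hk.carrier →+* Hk.carrier,
      IsBar K Hk bar ∧
      (∀ h : Hk.carrier, bar (bar h) = h) ∧
      ∀ bar' : Hk.carrier →+* Hk.carrier, IsBar K Hk bar' → bar' = bar :=
  ⟨Hk.isUnit_T K.isUnit_q, bar K Hk, isBar_bar K Hk, bar_bar K Hk,
    fun _ => eq_bar_of_isBar K Hk⟩

end KLPaper
end

section
/- Let w ∈ W and suppose D ∈ H* satisfies: (1) D = Σ_{y ≥ w} r_y S_y with r_w = 1 and r_y ∈ ⊕_{i=0}^{ℓ(y)−ℓ(w)−1} R_i for all y > w; and (2) conj(D) = q^{ℓ(w)} D. Then D = D_w, i.e., ⟨D, C_x⟩ = (−1)^{ℓ(w)} δ_{w,x} for all x ∈ W. -/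
namespace KLPaper

open Polynomial
open scoped Classical

variable {B : Type*} {W : Type*} [Group W] {M : CoxeterMatrix B}

variable {R : Type*} [CommRing R]

variable {cs : CoxeterSystem M W}

/-!
Expand `D (C_x) = Σ_y P_{y,x} D (T_y)`: only `w ≤ y ≤ x` contribute, so `D (C_x) = 0` unless
`w ≤ x`, and `D (C_w) = (-1)^{ℓ(w)}`. For `w < x` the degree bounds on `P_{y,x}` and on the
coefficients of `D` put `D (C_x)` in degrees `[0, ℓ(x) - ℓ(w))`, while bar-invariance of `C_x`
and of `D` give `conj (D (C_x)) = q^{-(ℓ(x) - ℓ(w))} D (C_x)`; the two sides of this equation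
live in disjoint ranges of degrees, so `D (C_x) = 0`.
-/

theorem bruhatLE.eq_or_length_lt {x y : W} (h : bruhatLE cs x y) :
    x = y ∨ cs.length x < cs.length y := by
  induction h with
  | refl => exact Or.inl rfl
  | tail _ hstep ih => exact Or.inr (ih.elim (· ▸ hstep.2) (·.trans hstep.2))

theorem bruhatLE.length_le {x y : W} (h : bruhatLE cs x y) : cs.length x ≤ cs.length y :=
  h.eq_or_length_lt.elim (fun e => e ▸ le_rfl) le_of_lt

theorem bruhatLE.antisymm {x y : W} (h₁ : bruhatLE cs x y) (h₂ : bruhatLE cs y x) : x = y :=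
  h₁.eq_or_length_lt.resolve_right fun hlt => (h₂.length_le.not_gt hlt).elim

theorem neg_one_pow_mul_mem_iff {S : AddSubgroup R} {k : ℕ} {r : R} :
    (-1) ^ k * r ∈ S ↔ r ∈ S := by
  rcases neg_one_pow_eq_or R k with h | h <;> simp [h, neg_mem_iff]

theorem eq_neg_one_pow_of_neg_one_pow_mul_eq_one {k : ℕ} {a : R} (h : (-1) ^ k * a = 1) :
    a = (-1) ^ k := by
  have hsq : (-1 : R) ^ k * (-1) ^ k = 1 := by rw [← mul_pow, neg_one_mul, neg_neg, one_pow]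
  linear_combination (-1 : R) ^ k * h - a * hsq

namespace KLRing

variable (K : KLRing R)

theorem conj_qinv : K.conj K.qinv = K.q := by
  rw [← K.conj_q, K.conj_conj]

theorem qinv_pow_mem (n : ℕ) : K.qinv ^ n ∈ K.grade (-(2 * n)) := by
  induction n with
  | zero => simpa using K.one_mem
  | succ m ih =>
    have hqinv : K.qinv ∈ K.grade (-2) := K.conj_q ▸ K.conj_grade 2 K.q K.q_mem
    convert K.grade_mul _ _ _ _ ih hqinv using 2 <;> push_cast <;> ring

theorem eq_qinv_pow_mul_of_q_pow_mul_eq {m n : ℕ} {a b : R}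
    (h : K.q ^ (m + n) * a = K.q ^ m * b) : a = K.qinv ^ n * b := by
  have hq : ∀ k : ℕ, (K.q * K.qinv) ^ k = 1 := fun k => by rw [K.q_qinv, one_pow]
  linear_combination K.qinv ^ (m + n) * h - a * hq (m + n) + K.qinv ^ n * b * hq m

variable {K}

theorem grade_le_gradeSum {i n : ℕ} (h : i < n) : K.grade i ≤ K.gradeSum n :=
  le_iSup₂_of_le i (Finset.mem_range.2 h) le_rfl

theorem gradeSum_mono {m n : ℕ} (h : m ≤ n) : K.gradeSum m ≤ K.gradeSum n :=
  iSup₂_le fun _ hi => grade_le_gradeSum ((Finset.mem_range.1 hi).trans_le h)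

theorem map_mem_of_mem_gradeSum (f : R →+ R) (T : AddSubgroup R) {n : ℕ}
    (hf : ∀ i < n, ∀ r ∈ K.grade i, f r ∈ T) {r : R} (hr : r ∈ K.gradeSum n) : f r ∈ T :=
  (iSup₂_le fun i hi s hs => hf i (Finset.mem_range.1 hi) s hs : K.gradeSum n ≤ T.comap f) hr

theorem mul_mem_gradeSum {a b n : ℕ} (hab : a + b ≤ n + 1) {r s : R}
    (hr : r ∈ K.gradeSum a) (hs : s ∈ K.gradeSum b) : r * s ∈ K.gradeSum n := by
  refine map_mem_of_mem_gradeSum (AddMonoidHom.mulRight s) _ (fun i hi r' hr' => ?_) hr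
  refine map_mem_of_mem_gradeSum (AddMonoidHom.mulLeft r') _ (fun j hj s' hs' => ?_) hs
  have hmul : r' * s' ∈ K.grade ((i + j : ℕ) : ℤ) := by
    push_cast; exact K.grade_mul _ _ _ _ hr' hs'
  exact grade_le_gradeSum (by omega) hmul

/-- Homogeneous degrees in `(-n, 0]` and in `[-2n, -n)` cannot meet. -/
theorem eq_zero_of_conj_eq_qinv_pow_mul {n : ℕ} {a : R} (ha : a ∈ K.gradeSum n)
    (h : K.conj a = K.qinv ^ n * a) : a = 0 := by
  have hdisj : Disjoint (⨆ i ∈ Set.Ioc (-(n : ℤ)) 0, K.grade i)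
      (⨆ i ∈ Set.Ico (-(2 * n : ℤ)) (-n), K.grade i) :=
    K.decomp.addSubgroup_iSupIndep.disjoint_biSup_biSup'
      (Set.disjoint_left.2 fun i hi hi' => by
        simp only [Set.mem_Ioc, Set.mem_Ico] at hi hi'; omega)
      (Set.finite_Ioc _ _)
  have hconj : K.conj a ∈ ⨆ i ∈ Set.Ioc (-(n : ℤ)) 0, K.grade i :=
    map_mem_of_mem_gradeSum K.conj.toAddMonoidHom _ (fun i hi r hr =>
      le_biSup (fun j => K.grade j) (show -(i : ℤ) ∈ Set.Ioc (-(n : ℤ)) 0 by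
        simp only [Set.mem_Ioc]; omega) (K.conj_grade i r hr)) ha
  have hqinv : K.qinv ^ n * a ∈ ⨆ i ∈ Set.Ico (-(2 * n : ℤ)) (-n), K.grade i :=
    map_mem_of_mem_gradeSum (AddMonoidHom.mulLeft (K.qinv ^ n)) _ (fun i hi r hr =>
      le_biSup (fun j => K.grade j) (show -(2 * n : ℤ) + i ∈ Set.Ico (-(2 * n : ℤ)) (-n) by
        simp only [Set.mem_Ico]; omega) (K.grade_mul _ _ _ _ (K.qinv_pow_mem n) hr)) ha
  have hconj_zero : K.conj a = 0 := AddSubgroup.disjoint_def.1 hdisj hconj (h ▸ hqinv)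
  rw [← K.conj_conj a, hconj_zero, map_zero]

end KLRing

theorem Hecke.apply_eq_sum {q : R} (Hk : Hecke cs R q) (D : Hk.carrier →ₗ[R] R)
    (h : Hk.carrier) :
    D h = ∑ y ∈ (Hk.basis.repr h).support, Hk.basis.repr h y * D (Hk.T y) := by
  conv_lhs => rw [← Hk.basis.linearCombination_repr h, Finsupp.linearCombination_apply,
    Finsupp.sum, map_sum]
  simp only [map_smul, Hk.basis_eq, smul_eq_mul]

namespace IsKLElt

variable {K : KLRing R} {Hk : Hecke cs R K.q} {bar : Hk.carrier →+* Hk.carrier}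
  {x w : W} {Cx : Hk.carrier} {D : Hk.carrier →ₗ[R] R}

theorem repr_mem_gradeSum_succ (hC : IsKLElt K Hk bar x Cx) {y : W} (hyx : bruhatLE cs y x) :
    Hk.basis.repr Cx y ∈ K.gradeSum (cs.length x - cs.length y + 1) := by
  by_cases hy : y = x
  · subst hy
    rw [hC.1]
    exact KLRing.grade_le_gradeSum (i := 0) (by omega) K.one_mem
  · exact KLRing.gradeSum_mono (Nat.le_succ _) (hC.2.2.1 y hyx hy)

theorem bruhatLE_of_apply_ne_zero (hC : IsKLElt K Hk bar x Cx)
    (hsupp : ∀ y : W, D (Hk.T y) ≠ 0 → bruhatLE cs w y) {y : W}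
    (hy : y ∈ (Hk.basis.repr Cx).support) (hD : D (Hk.T y) ≠ 0) :
    bruhatLE cs w y ∧ bruhatLE cs y x :=
  ⟨hsupp y hD, hC.2.1 y (Finsupp.mem_support_iff.1 hy)⟩

theorem apply_eq_zero_of_not_bruhatLE (hC : IsKLElt K Hk bar x Cx)
    (hsupp : ∀ y : W, D (Hk.T y) ≠ 0 → bruhatLE cs w y) (hwx : ¬ bruhatLE cs w x) :
    D Cx = 0 := by
  rw [Hk.apply_eq_sum]
  refine Finset.sum_eq_zero fun y hy => ?_
  by_cases hD : D (Hk.T y) = 0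
  · rw [hD, mul_zero]
  · obtain ⟨hwy, hyx⟩ := hC.bruhatLE_of_apply_ne_zero hsupp hy hD
    exact (hwx (hwy.trans hyx)).elim

theorem apply_self (hC : IsKLElt K Hk bar w Cx)
    (hsupp : ∀ y : W, D (Hk.T y) ≠ 0 → bruhatLE cs w y)
    (hw : (-1 : R) ^ cs.length w * D (Hk.T w) = 1) :
    D Cx = (-1) ^ cs.length w := by
  rw [Hk.apply_eq_sum, Finset.sum_eq_single w, hC.1, one_mul,
    eq_neg_one_pow_of_neg_one_pow_mul_eq_one hw]
  · intro y hy hyw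
    by_cases hD : D (Hk.T y) = 0
    · rw [hD, mul_zero]
    · obtain ⟨hwy, hyw'⟩ := hC.bruhatLE_of_apply_ne_zero hsupp hy hD
      exact (hyw (hyw'.antisymm hwy)).elim
  · intro hw
    rw [Finsupp.notMem_support_iff.1 hw, zero_mul]

theorem apply_mem_gradeSum (hC : IsKLElt K Hk bar x Cx)
    (hsupp : ∀ y : W, D (Hk.T y) ≠ 0 → bruhatLE cs w y)
    (hw : (-1 : R) ^ cs.length w * D (Hk.T w) = 1)
    (hgr : ∀ y : W, bruhatLE cs w y → y ≠ w →
      (-1 : R) ^ cs.length y * D (Hk.T y) ∈ K.gradeSum (cs.length y - cs.length w))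
    (hwx : bruhatLE cs w x) (hxw : x ≠ w) :
    D Cx ∈ K.gradeSum (cs.length x - cs.length w) := by
  rw [Hk.apply_eq_sum]
  refine sum_mem fun y hy => ?_
  by_cases hD : D (Hk.T y) = 0
  · rw [hD, mul_zero]
    exact zero_mem _
  obtain ⟨hwy, hyx⟩ := hC.bruhatLE_of_apply_ne_zero hsupp hy hD
  rw [← neg_one_pow_mul_mem_iff (k := cs.length y), mul_left_comm]
  by_cases hyw : y = w
  · subst hyw
    rw [hw, mul_one]
    exact hC.2.2.1 y hwx (Ne.symm hxw)
  · have := hyx.length_le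
    have := hwy.length_le
    exact KLRing.mul_mem_gradeSum (by omega) (hC.repr_mem_gradeSum_succ hyx) (hgr y hwy hyw)

theorem conj_apply (hC : IsKLElt K Hk bar x Cx)
    (hdual : ∀ h : Hk.carrier, K.conj (D (bar h)) = K.q ^ cs.length w * D h)
    (hwx : cs.length w ≤ cs.length x) :
    K.conj (D Cx) = K.qinv ^ (cs.length x - cs.length w) * D Cx := by
  have h := hdual Cx
  rw [hC.2.2.2, map_smul, smul_eq_mul, map_mul, map_pow, K.conj_qinv,
    ← Nat.add_sub_cancel' hwx] at h
  exact K.eq_qinv_pow_mul_of_q_pow_mul_eq h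

end IsKLElt

/-- The coefficient `r_y` of `D = Σ r_y S_y` is `(-1)^{ℓ(y)} D (T_y)`, and `conj D` is
`h ↦ conj (D (bar h))`. -/
theorem statement5_general (K : KLRing R) (Hk : Hecke cs R K.q)
    (bar : Hk.carrier →+* Hk.carrier)
    (C : W → Hk.carrier) (hC : ∀ w : W, IsKLElt K Hk bar w (C w))
    (w : W) (D : Hk.carrier →ₗ[R] R)
    (hsupp : ∀ y : W, D (Hk.T y) ≠ 0 → bruhatLE cs w y)
    (hw : (-1 : R) ^ cs.length w * D (Hk.T w) = 1)
    (hgr : ∀ y : W, bruhatLE cs w y → y ≠ w →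
      (-1 : R) ^ cs.length y * D (Hk.T y) ∈ K.gradeSum (cs.length y - cs.length w))
    (hdual : ∀ h : Hk.carrier, K.conj (D (bar h)) = K.q ^ cs.length w * D h) :
    ∀ x : W, D (C x) = if x = w then (-1 : R) ^ cs.length w else 0 := by
  intro x
  split_ifs with hxw
  · subst hxw
    exact (hC x).apply_self hsupp hw
  by_cases hwx : bruhatLE cs w x
  · exact K.eq_zero_of_conj_eq_qinv_pow_mul ((hC x).apply_mem_gradeSum hsupp hw hgr hwx hxw)
      ((hC x).conj_apply hdual hwx.length_le)
  · exact (hC x).apply_eq_zero_of_not_bruhatLE hsupp hwx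

/-- if `D ∈ H* = Hom_R(H, R)` satisfies `D = Σ_{y ≥ w} r_y S_y` with
`r_w = 1` and `r_y ∈ ⊕_{i=0}^{ℓ(y)-ℓ(w)-1} R_i` for `y > w`, and `conj D = q^{ℓ(w)} D`,
then `D = D_w`, i.e. `⟨D, C_x⟩ = (-1)^{ℓ(w)} δ_{w,x}` for all `x ∈ W`.
Here the coefficient `r_y` of `D = Σ r_y S_y` is `(-1)^{ℓ(y)} ⟨D, T_y⟩` (since
`⟨S_y, T_x⟩ = (-1)^{ℓ(y)} δ_{y,x}`), and the bar involution of `H*` is given by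
`⟨conj D, h⟩ = conj ⟨D, bar h⟩`. -/
theorem statement5 (K : KLRing R) (Hk : Hecke cs R K.q)
    (bar : Hk.carrier →+* Hk.carrier) (hbar : IsBar K Hk bar)
    (C : W → Hk.carrier) (hC : ∀ w : W, IsKLElt K Hk bar w (C w))
    (w : W) (D : Hk.carrier →ₗ[R] R)
    (hsupp : ∀ y : W, D (Hk.T y) ≠ 0 → bruhatLE cs w y)
    (hw : (-1 : R) ^ cs.length w * D (Hk.T w) = 1)
    (hgr : ∀ y : W, bruhatLE cs w y → y ≠ w →
      (-1 : R) ^ cs.length y * D (Hk.T y) ∈ K.gradeSum (cs.length y - cs.length w))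
    (hdual : ∀ h : Hk.carrier, K.conj (D (bar h)) = K.q ^ cs.length w * D h) :
    ∀ x : W, D (C x) = if x = w then (-1 : R) ^ cs.length w else 0 :=
  statement5_general K Hk bar C hC w D hsupp hw hgr hdual

end KLPaper
end
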